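/- Consider the reduction f from 3SAT mapping a 3CNF formula φ = c₁ ∧ … ∧ c_n over variables x₁,…,x_m to the monotone hybrid formula f(φ) = ◇(i₀ ∧ ◇i₁) ∧ (⋀_{ℓ=1}^m (◇(i₀ ∧ x_ℓ) ∨ ◇(i₁ ∧ x_ℓ))) ∧ h(φ), where i₀, i₁ and all x_ℓ are nominals, h(c_j) = ◇(h(l₁ʲ) ∨ h(l₂ʲ) ∨ h(l₃ʲ)), h of a positive literal x is (i₁ ∧ x), h of a negative literal ¬x is (i₀ ∧ x), and h(c₁ ∧ … ∧ c_n) = h(c₁) ∧ … ∧ h(c_n). Then φ is satisfiable as a propositional formula if and only if f(φ) is satisfiable in some model over a linear frame. -/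

import Mathlib

/-- A literal: a propositional variable together with its sign (true = positive). -/
abbrev Lit := ℕ × Bool

/-- A 3SAT clause: a triple of literals. -/
abbrev Clause := Lit × Lit × Lit

/-- Monotone hybrid formulas with nominals, ⊤, ∧, ∨ and ◇ (the fragment needed
for the reduction f; no negation). -/
inductive HForm : Type
  | nom : ℕ → HForm
  | top : HForm
  | conj : HForm → HForm → HForm
  | disj : HForm → HForm → HForm
  | dia : HForm → HForm

/-- Satisfaction in a Kripke model (W,R,η) with nominal valuation η. -/
def sat {W : Type} (R : W → W → Prop) (η : ℕ → W) (w : W) : HForm → Prop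
  | .nom i => η i = w
  | .top => True
  | .conj a b => sat R η w a ∧ sat R η w b
  | .disj a b => sat R η w a ∨ sat R η w b
  | .dia a => ∃ v, R w v ∧ sat R η v a

/-- A relation is linear: transitive, irreflexive and trichotomous. -/
def IsLinear {W : Type} (R : W → W → Prop) : Prop :=
  Transitive R ∧ Irreflexive R ∧ ∀ u v, R u v ∨ u = v ∨ R v u

/-- Nominal encoding: i₀ ↦ 0, i₁ ↦ 1, variable x_v ↦ v + 1 (for v ≥ 1).
`hLit`: a positive literal x becomes (i₁ ∧ x), a negative one (i₀ ∧ x). -/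
def hLit : Lit → HForm
  | (v, true) => .conj (.nom 1) (.nom (v + 1))
  | (v, false) => .conj (.nom 0) (.nom (v + 1))

def hClause (c : Clause) : HForm :=
  .dia (.disj (.disj (hLit c.1) (hLit c.2.1)) (hLit c.2.2))

def hCNF : List Clause → HForm
  | [] => .top
  | c :: cs => .conj (hClause c) (hCNF cs)

/-- ⋀_{ℓ=1}^m (◇(i₀ ∧ x_ℓ) ∨ ◇(i₁ ∧ x_ℓ)). -/
def assignConj : ℕ → HForm
  | 0 => .top
  | m + 1 =>
      .conj
        (.disj (.dia (.conj (.nom 0) (.nom (m + 2))))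
               (.dia (.conj (.nom 1) (.nom (m + 2)))))
        (assignConj m)

/-- The reduction f(φ) = ◇(i₀ ∧ ◇i₁) ∧ ⋀_ℓ (◇(i₀ ∧ x_ℓ) ∨ ◇(i₁ ∧ x_ℓ)) ∧ h(φ). -/
def f (m : ℕ) (cs : List Clause) : HForm :=
  .conj (.dia (.conj (.nom 0) (.dia (.nom 1)))) (.conj (assignConj m) (hCNF cs))

def litTrue (β : ℕ → Bool) (l : Lit) : Prop := β l.1 = l.2

/-!
In a model of f(φ), the conjunct ◇(i₀ ∧ ◇i₁) makes i₀ and i₁ name distinct points, and each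
clause conjunct ◇(h(l₁) ∨ h(l₂) ∨ h(l₃)) reaches a point where some literal's variable is named
together with i₁ (positive literal) or i₀ (negative literal). Hence making x true exactly when x
names the point of i₁ satisfies φ. Conversely, from a satisfying assignment β build a model on
(ℕ, <), evaluated at 0, in which i₀, i₁ name 1, 2 and x names 2 if β x holds and 1 otherwise.
-/

def Clause.Holds (P : Lit → Prop) (c : Clause) : Prop := P c.1 ∨ P c.2.1 ∨ P c.2.2

theorem Clause.Holds.imp {P Q : Lit → Prop} {c : Clause} (hc : c.Holds P)
    (h₁ : P c.1 → Q c.1) (h₂ : P c.2.1 → Q c.2.1) (h₃ : P c.2.2 → Q c.2.2) : c.Holds Q :=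
  Or.imp h₁ (Or.imp h₂ h₃) hc

section Semantics

variable {W : Type} (R : W → W → Prop) (η : ℕ → W) (w : W)

theorem sat_dia_hLit (l : Lit) :
    sat R η w (.dia (hLit l)) ↔ R w (η (l.1 + 1)) ∧ η l.2.toNat = η (l.1 + 1) := by
  obtain ⟨v, _ | _⟩ := l <;> simp [hLit, sat, eq_comm]

theorem sat_hClause (c : Clause) :
    sat R η w (hClause c) ↔ c.Holds (fun l => sat R η w (.dia (hLit l))) := by
  simp only [hClause, sat, Clause.Holds, or_assoc, and_or_left, exists_or]

theorem sat_hCNF (cs : List Clause) :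
    sat R η w (hCNF cs) ↔ ∀ c ∈ cs, sat R η w (hClause c) := by
  induction cs with
  | nil => simp [hCNF, sat]
  | cons c cs ih => simp [hCNF, sat, ih]

theorem sat_assignConj (m : ℕ) :
    sat R η w (assignConj m) ↔ ∀ ℓ < m, ∃ b : Bool, sat R η w (.dia (hLit (ℓ + 1, b))) := by
  induction m with
  | zero => simp [assignConj, sat]
  | succ m ih =>
    rw [Nat.forall_lt_succ_right, ← ih, and_comm]
    simp [assignConj, sat, hLit, Bool.exists_bool]

end Semantics

theorem isLinear_lt {α : Type} [LinearOrder α] : IsLinear (fun a b : α => a < b) :=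
  ⟨fun _ _ _ => lt_trans, lt_irrefl, lt_trichotomy⟩

section Completeness

variable (β : ℕ → Bool)

/-- Nominal `n + 1` stands for the variable `n` only when `n ≥ 1`: nominal `1` is i₁ itself. -/
def canonicalNom : ℕ → ℕ
  | 0 => 1
  | 1 => 2
  | n + 1 => (β n).toNat + 1

theorem canonicalNom_toNat (b : Bool) : canonicalNom β b.toNat = b.toNat + 1 := by
  cases b <;> rfl

theorem canonicalNom_add_one {n : ℕ} (hn : 1 ≤ n) : canonicalNom β (n + 1) = (β n).toNat + 1 := by
  obtain ⟨k, rfl⟩ := Nat.exists_eq_add_of_le' hn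
  rfl

variable {β}

theorem sat_dia_hLit_canonicalNom {l : Lit} (hl : 1 ≤ l.1) (h : litTrue β l) :
    sat (· < ·) (canonicalNom β) 0 (.dia (hLit l)) := by
  rw [sat_dia_hLit, canonicalNom_toNat, canonicalNom_add_one β hl, h]
  exact ⟨Nat.succ_pos _, rfl⟩

theorem sat_f_canonicalNom {m : ℕ} {cs : List Clause}
    (hv : ∀ c ∈ cs, 1 ≤ c.1.1 ∧ 1 ≤ c.2.1.1 ∧ 1 ≤ c.2.2.1)
    (hβ : ∀ c ∈ cs, c.Holds (litTrue β)) :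
    sat (· < ·) (canonicalNom β) 0 (f m cs) := by
  refine ⟨⟨1, one_pos, rfl, 2, one_lt_two, rfl⟩, ?_, ?_⟩
  · exact (sat_assignConj _ _ _ m).2 fun ℓ _ =>
      ⟨β (ℓ + 1), sat_dia_hLit_canonicalNom (Nat.le_add_left 1 ℓ) rfl⟩
  · refine (sat_hCNF _ _ _ cs).2 fun c hc => (sat_hClause _ _ _ c).2 ?_
    obtain ⟨h₁, h₂, h₃⟩ := hv c hc
    exact (hβ c hc).imp (sat_dia_hLit_canonicalNom h₁) (sat_dia_hLit_canonicalNom h₂)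
      (sat_dia_hLit_canonicalNom h₃)

end Completeness

section Soundness

variable {W : Type} {R : W → W → Prop} {η : ℕ → W} {w : W}

noncomputable def readAssignment (η : ℕ → W) (v : ℕ) : Bool :=
  open Classical in decide (η (v + 1) = η 1)

theorem litTrue_readAssignment (hne : η 0 ≠ η 1) {l : Lit} (h : sat R η w (.dia (hLit l))) :
    litTrue (readAssignment η) l := by
  rw [sat_dia_hLit] at h
  obtain ⟨v, _ | _⟩ := l
  · simpa [litTrue, readAssignment, ← h.2] using hne
  · simpa [litTrue, readAssignment] using h.2.symm

theorem holds_readAssignment_of_sat_f (hirr : ∀ u, ¬ R u u) {m : ℕ} {cs : List Clause}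
    (h : sat R η w (f m cs)) : ∀ c ∈ cs, c.Holds (litTrue (readAssignment η)) := by
  obtain ⟨⟨_, -, rfl, _, h01, rfl⟩, -, hcnf⟩ := h
  have hne : η 0 ≠ η 1 := fun h => hirr _ (h ▸ h01)
  intro c hc
  exact ((sat_hClause _ _ _ c).1 ((sat_hCNF _ _ _ cs).1 hcnf c hc)).imp
    (litTrue_readAssignment hne) (litTrue_readAssignment hne) (litTrue_readAssignment hne)

end Soundness

/-- A 3CNF formula over variables x₁,…,x_m is propositionally satisfiable iff f(φ) is
satisfiable in some model over a linear frame. -/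
theorem stmt12 (m : ℕ) (cs : List Clause)
    (hv : ∀ c ∈ cs, c.1.1 ∈ Finset.Icc 1 m ∧ c.2.1.1 ∈ Finset.Icc 1 m ∧
      c.2.2.1 ∈ Finset.Icc 1 m) :
    (∃ β : ℕ → Bool, ∀ c ∈ cs, litTrue β c.1 ∨ litTrue β c.2.1 ∨ litTrue β c.2.2) ↔
      (∃ (W : Type) (R : W → W → Prop), IsLinear R ∧
        ∃ (η : ℕ → W) (w : W), sat R η w (f m cs)) := by
  constructor
  · rintro ⟨β, hβ⟩
    have hpos : ∀ c ∈ cs, 1 ≤ c.1.1 ∧ 1 ≤ c.2.1.1 ∧ 1 ≤ c.2.2.1 := fun c hc =>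
      have ⟨h₁, h₂, h₃⟩ := hv c hc
      ⟨(Finset.mem_Icc.1 h₁).1, (Finset.mem_Icc.1 h₂).1, (Finset.mem_Icc.1 h₃).1⟩
    exact ⟨ℕ, (· < ·), isLinear_lt, canonicalNom β, 0, sat_f_canonicalNom hpos hβ⟩
  · rintro ⟨W, R, ⟨-, hirr, -⟩, η, w, h⟩
    exact ⟨readAssignment η, holds_readAssignment_of_sat_f hirr h⟩
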